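/- arXiv:2301.09225 — 4 statements merged into one kernel-verified Lean document; each statement's English description precedes it below -/
import Mathlib

section
/- Let T > 0, ε ∈ {−1, +1} and x₀ ∈ ℝ. Define Q_ε(x,t) = (2πt)^{−1/2} e^{−(x−x₀)²/(2t)} · Φ(ε x/√(T−t)) / Φ(ε x₀/√T) for x ∈ ℝ, t ∈ (0,T), where Φ(u) = ∫_{−∞}^{u} e^{−s²/2} ds. Then Q_ε satisfies the Kolmogorov forward (Fokker–Planck) equation ∂_t Q_ε(x,t) = −∂_x [ (∂_x log Φ(ε x/√(T−t))) · Q_ε(x,t) ] + (1/2) ∂_{xx} Q_ε(x,t) for all x ∈ ℝ and t ∈ (0,T). -/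
/-- Unnormalized Gaussian cumulative integral: `Φ u = ∫_{-∞}^u e^{-s²/2} ds`. -/
noncomputable def Phi (u : ℝ) : ℝ := ∫ s in Set.Iic u, Real.exp (-s ^ 2 / 2)

/-- The extended skew-Normal transition density of Theorem 1:
`Q_ε(x,t) = (2πt)^{-1/2} e^{-(x-x₀)²/(2t)} Φ(ε x/√(T-t)) / Φ(ε x₀/√T)`. -/
noncomputable def Q (T ε x₀ t x : ℝ) : ℝ :=
  (Real.sqrt (2 * Real.pi * t))⁻¹ * Real.exp (-(x - x₀) ^ 2 / (2 * t)) *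
    (Phi (ε * x / Real.sqrt (T - t)) / Phi (ε * x₀ / Real.sqrt T))

lemma intExp : MeasureTheory.Integrable (fun s : ℝ => Real.exp (-s ^ 2 / 2)) := by
  have h := integrable_exp_neg_mul_sq (by norm_num : (0:ℝ) < 1/2)
  convert h using 2 with s
  ring_nf

lemma Phi_pos (u : ℝ) : 0 < Phi u := by
  rw [Phi, MeasureTheory.setIntegral_pos_iff_support_of_nonneg_ae]
  · have : Function.support (fun s : ℝ => Real.exp (-s ^ 2 / 2)) = Set.univ := by
      ext s; simp [Real.exp_ne_zero]
    rw [this, Set.univ_inter]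
    simp [Real.volume_Iic]
  · filter_upwards with s using (Real.exp_pos _).le
  · exact intExp.integrableOn

lemma hasDerivPhi (u : ℝ) : HasDerivAt Phi (Real.exp (-u ^ 2 / 2)) u := by
  have key : Phi = fun v => (∫ s in Set.Iic (0:ℝ), Real.exp (-s ^ 2 / 2)) + ∫ s in (0:ℝ)..v, Real.exp (-s ^ 2 / 2) := by
    funext v
    rw [Phi, ← intervalIntegral.integral_Iic_sub_Iic intExp.integrableOn intExp.integrableOn]
    ring
  rw [key]
  exact (intervalIntegral.integral_hasDerivAt_right intExp.intervalIntegrable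
    intExp.1.stronglyMeasurableAtFilter (Real.continuous_exp.comp (by continuity)).continuousAt).const_add _


set_option maxHeartbeats 1600000 in
/-- `Q_ε` solves the Kolmogorov forward (Fokker–Planck) equation
`∂_t Q = -∂_x [ (∂_x log Φ(ε x/√(T-t))) Q ] + (1/2) ∂_{xx} Q` on `ℝ × (0,T)`. -/
theorem stmt_1 (T ε x₀ : ℝ) (hT : 0 < T) (hε : ε = 1 ∨ ε = -1) :
    ∀ (x : ℝ), ∀ t ∈ Set.Ioo (0 : ℝ) T,
      deriv (fun τ => Q T ε x₀ τ x) t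
        = - deriv (fun y =>
              deriv (fun z => Real.log (Phi (ε * z / Real.sqrt (T - t)))) y
                * Q T ε x₀ t y) x
          + (1 / 2) * deriv (deriv (fun y => Q T ε x₀ t y)) x := by
  intro x t htm
  obtain ⟨ht0, htT⟩ := htm
  have hs : 0 < T - t := by linarith
  have hcpos : 0 < Real.sqrt (T - t) := Real.sqrt_pos.2 hs
  have hSpos : 0 < Real.sqrt (2 * Real.pi * t) := Real.sqrt_pos.2 (by positivity)
  have hc2 : Real.sqrt (T - t) ^ 2 = T - t := Real.sq_sqrt hs.le
  have hS2 : Real.sqrt (2 * Real.pi * t) ^ 2 = 2 * Real.pi * t := Real.sq_sqrt (by positivity)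
  have hCpos : 0 < Phi (ε * x₀ / Real.sqrt T) := Phi_pos _
  -- x-direction building blocks
  have hlinx : ∀ y : ℝ, HasDerivAt (fun z : ℝ => ε * z / Real.sqrt (T - t)) (ε / Real.sqrt (T - t)) y := by
    intro y
    simpa using ((hasDerivAt_id y).const_mul ε).div_const (Real.sqrt (T - t))
  have hFy : ∀ y : ℝ, HasDerivAt (fun z : ℝ => Phi (ε * z / Real.sqrt (T - t)))
      (Real.exp (-(ε * y / Real.sqrt (T - t)) ^ 2 / 2) * (ε / Real.sqrt (T - t))) y := by
    intro y
    exact (hasDerivPhi _).comp y (hlinx y)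
  have hE : ∀ y : ℝ, HasDerivAt (fun z : ℝ => Real.exp (-(z - x₀) ^ 2 / (2 * t)))
      (Real.exp (-(y - x₀) ^ 2 / (2 * t)) * (-(y - x₀) / t)) y := by
    intro y
    have h := ((((hasDerivAt_id y).sub_const x₀).pow 2).neg.div_const (2 * t)).exp
    simp only [Pi.neg_def, Pi.pow_def, Pi.div_def, id, Nat.cast_ofNat, Nat.reduceSub, pow_one] at h
    convert h using 1
    field_simp
  have hphi : ∀ y : ℝ, HasDerivAt (fun z : ℝ => Real.exp (-(ε * z / Real.sqrt (T - t)) ^ 2 / 2))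
      (Real.exp (-(ε * y / Real.sqrt (T - t)) ^ 2 / 2) *
        (-(ε * y / Real.sqrt (T - t)) * (ε / Real.sqrt (T - t)))) y := by
    intro y
    have h := (((hlinx y).pow 2).neg.div_const 2).exp
    simp only [Pi.neg_def, Pi.pow_def, Pi.div_def, id, Nat.cast_ofNat, Nat.reduceSub, pow_one] at h
    convert h using 1
    push_cast
    ring
  -- t-direction building blocks
  have hA : HasDerivAt (fun τ : ℝ => (Real.sqrt (2 * Real.pi * τ))⁻¹)
      (-(2 * Real.pi / (2 * Real.sqrt (2 * Real.pi * t))) / Real.sqrt (2 * Real.pi * t) ^ 2) t := by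
    have hsq : HasDerivAt (fun τ : ℝ => Real.sqrt (2 * Real.pi * τ))
        (2 * Real.pi / (2 * Real.sqrt (2 * Real.pi * t))) t := by
      have h := (HasDerivAt.const_mul (2 * Real.pi) (hasDerivAt_id t)).sqrt (by positivity)
      simpa using h
    exact hsq.inv hSpos.ne'
  have hB : HasDerivAt (fun τ : ℝ => Real.exp (-(x - x₀) ^ 2 / (2 * τ)))
      (Real.exp (-(x - x₀) ^ 2 / (2 * t)) * ((x - x₀) ^ 2 / (2 * t ^ 2))) t := by
    have hden : HasDerivAt (fun τ : ℝ => 2 * τ) 2 t := by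
      simpa using (hasDerivAt_id t).const_mul 2
    have h := ((hasDerivAt_const t (-(x - x₀) ^ 2)).div hden (by positivity)).exp
    simp only [Pi.neg_def, Pi.pow_def, Pi.div_def, id, Nat.cast_ofNat, Nat.reduceSub, pow_one] at h
    convert h using 1
    field_simp
    ring
  have hD : HasDerivAt (fun τ : ℝ => Phi (ε * x / Real.sqrt (T - τ)))
      (Real.exp (-(ε * x / Real.sqrt (T - t)) ^ 2 / 2) * (ε * x / (2 * Real.sqrt (T - t) ^ 3))) t := by
    have hsq2 : HasDerivAt (fun τ : ℝ => Real.sqrt (T - τ)) (-1 / (2 * Real.sqrt (T - t))) t := by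
      have h := ((hasDerivAt_const t T).sub (hasDerivAt_id t)).sqrt hs.ne'
      simpa using h
    have hinner : HasDerivAt (fun τ : ℝ => ε * x / Real.sqrt (T - τ))
        (ε * x / (2 * Real.sqrt (T - t) ^ 3)) t := by
      have h := (hasDerivAt_const t (ε * x)).div hsq2 hcpos.ne'
      simp only [Pi.neg_def, Pi.pow_def, Pi.div_def, id, Nat.cast_ofNat, Nat.reduceSub, pow_one] at h
      refine h.congr_deriv ?_
      ring
    exact (hasDerivPhi _).comp t hinner
  -- LHS time derivative
  have e1 := HasDerivAt.deriv (show HasDerivAt (fun τ => Q T ε x₀ τ x) _ t by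
    simp only [Q]; exact (hA.mul hB).mul (hD.div_const _))
  -- drift term
  have hlog : ∀ y : ℝ, deriv (fun z => Real.log (Phi (ε * z / Real.sqrt (T - t)))) y
      = Real.exp (-(ε * y / Real.sqrt (T - t)) ^ 2 / 2) * (ε / Real.sqrt (T - t)) /
          Phi (ε * y / Real.sqrt (T - t)) :=
    fun y => ((hFy y).log (Phi_pos _).ne').deriv
  have hfun1 : (fun y => deriv (fun z => Real.log (Phi (ε * z / Real.sqrt (T - t)))) y * Q T ε x₀ t y)
      = fun y => (Real.sqrt (2 * Real.pi * t))⁻¹ * Real.exp (-(y - x₀) ^ 2 / (2 * t)) *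
          (Real.exp (-(ε * y / Real.sqrt (T - t)) ^ 2 / 2) * (ε / Real.sqrt (T - t))) /
            Phi (ε * x₀ / Real.sqrt T) := by
    funext y
    rw [hlog y]
    simp only [Q]
    field_simp [(Phi_pos (ε * y / Real.sqrt (T - t))).ne']
  have hterm1 := (((hE x).const_mul (Real.sqrt (2 * Real.pi * t))⁻¹).mul
      ((hphi x).mul_const (ε / Real.sqrt (T - t)))).div_const (Phi (ε * x₀ / Real.sqrt T))
  -- first space derivative of Q
  have hderivQ : deriv (fun y => Q T ε x₀ t y) = fun y =>
      (Real.sqrt (2 * Real.pi * t))⁻¹ * (Real.exp (-(y - x₀) ^ 2 / (2 * t)) * (-(y - x₀) / t)) *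
        (Phi (ε * y / Real.sqrt (T - t)) / Phi (ε * x₀ / Real.sqrt T)) +
      (Real.sqrt (2 * Real.pi * t))⁻¹ * Real.exp (-(y - x₀) ^ 2 / (2 * t)) *
        (Real.exp (-(ε * y / Real.sqrt (T - t)) ^ 2 / 2) * (ε / Real.sqrt (T - t)) /
          Phi (ε * x₀ / Real.sqrt T)) := by
    funext y
    exact HasDerivAt.deriv (by
      simp only [Q]; exact ((hE y).const_mul _).mul ((hFy y).div_const _))
  have hneg : HasDerivAt (fun y : ℝ => -(y - x₀) / t) (-1 / t) x := by
    simpa using ((hasDerivAt_id x).sub_const x₀).neg.div_const t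
  have hP1 := (((hE x).mul hneg).const_mul (Real.sqrt (2 * Real.pi * t))⁻¹).mul
      ((hFy x).div_const (Phi (ε * x₀ / Real.sqrt T)))
  have hP2 := ((hE x).const_mul (Real.sqrt (2 * Real.pi * t))⁻¹).mul
      (((hphi x).mul_const (ε / Real.sqrt (T - t))).div_const (Phi (ε * x₀ / Real.sqrt T)))
  have hPs := hP1.add hP2
  simp only [Pi.mul_def, Pi.add_def] at e1 hterm1 hPs
  rw [e1, hfun1, hterm1.deriv, hderivQ, hPs.deriv]
  have hSne := hSpos.ne'
  have hcne := hcpos.ne'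
  have hCne := hCpos.ne'
  generalize hSg : Real.sqrt (2 * Real.pi * t) = S at hS2 hSne ⊢
  have hpi : Real.pi = S ^ 2 / (2 * t) := by rw [hS2]; field_simp
  rw [hpi]
  generalize hcg : Real.sqrt (T - t) = c at hcne ⊢
  generalize hPg : Phi (ε * x / c) = P
  generalize hCg : Phi (ε * x₀ / Real.sqrt T) = C at hCne ⊢
  generalize hE1g : Real.exp (-(x - x₀) ^ 2 / (2 * t)) = E1
  generalize hE2g : Real.exp (-(ε * x / c) ^ 2 / 2) = E2
  rcases hε with rfl | rfl <;>
  · field_simp [hSne, hcne, hCne, ht0.ne']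
    ring
end

section
/- Let ψ : (0,∞) → ℝ and let Λ : (0,∞) → (−1,1) be differentiable with Λ'(t) = Λ(t) (ψ(t) − 1/2) / t for all t > 0. Then α(t) := Λ(t) / √( t (1 − Λ(t)²) ) is differentiable on (0,∞) and satisfies the compatibility ODE α'(t) = ψ(t) α(t) (1/t + α(t)²) − α(t)/t − α(t)³/2 for all t > 0. -/
/-- Explicit solution of the compatibility ODE of Theorem 3: if `Λ : (0,∞) → (-1,1)` is
differentiable with `Λ'(t) = Λ(t)(ψ(t) - 1/2)/t`, then `α(t) = Λ(t)/√(t(1-Λ(t)²))` is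
differentiable and satisfies `α' = ψ α (1/t + α²) - α/t - α³/2` on `(0,∞)`. -/
theorem stmt_9 (ψ Λ : ℝ → ℝ)
    (hΛrange : ∀ t > (0 : ℝ), Λ t ∈ Set.Ioo (-1 : ℝ) 1)
    (hΛdiff : ∀ t > (0 : ℝ), DifferentiableAt ℝ Λ t)
    (hΛ' : ∀ t > (0 : ℝ), deriv Λ t = Λ t * (ψ t - 1 / 2) / t) :
    ∀ t > (0 : ℝ),
      DifferentiableAt ℝ (fun τ => Λ τ / Real.sqrt (τ * (1 - (Λ τ) ^ 2))) t ∧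
      deriv (fun τ => Λ τ / Real.sqrt (τ * (1 - (Λ τ) ^ 2))) t
        = ψ t * (Λ t / Real.sqrt (t * (1 - (Λ t) ^ 2)))
            * (1 / t + (Λ t / Real.sqrt (t * (1 - (Λ t) ^ 2))) ^ 2)
          - (Λ t / Real.sqrt (t * (1 - (Λ t) ^ 2))) / t
          - (Λ t / Real.sqrt (t * (1 - (Λ t) ^ 2))) ^ 3 / 2 := by
  intro t ht
  obtain ⟨hL1, hL2⟩ := hΛrange t ht
  set L := Λ t with hLdef
  set L' := deriv Λ t with hL'def
  have hL2pos : (0 : ℝ) < 1 - L ^ 2 := by nlinarith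
  have hgpos : (0 : ℝ) < t * (1 - L ^ 2) := mul_pos ht hL2pos
  have hΛd : HasDerivAt Λ L' t := (hΛdiff t ht).hasDerivAt
  have hsq : HasDerivAt (fun τ => Λ τ ^ 2) (2 * L ^ 1 * L') t := hΛd.pow 2
  have hsub : HasDerivAt (fun τ => 1 - Λ τ ^ 2) (0 - 2 * L ^ 1 * L') t :=
    (hasDerivAt_const t (1 : ℝ)).sub hsq
  have hmul : HasDerivAt (fun τ => τ * (1 - Λ τ ^ 2))
      (1 * (1 - L ^ 2) + t * (0 - 2 * L ^ 1 * L')) t :=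
    (hasDerivAt_id t).mul hsub
  have hne : t * (1 - L ^ 2) ≠ 0 := ne_of_gt hgpos
  have hsqrt : HasDerivAt (fun τ => Real.sqrt (τ * (1 - Λ τ ^ 2)))
      ((1 * (1 - L ^ 2) + t * (0 - 2 * L ^ 1 * L')) / (2 * Real.sqrt (t * (1 - L ^ 2)))) t :=
    hmul.sqrt hne
  set s := Real.sqrt (t * (1 - L ^ 2)) with hsdef
  have hspos : 0 < s := Real.sqrt_pos.mpr hgpos
  have hs2 : s ^ 2 = t * (1 - L ^ 2) := Real.sq_sqrt (le_of_lt hgpos)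
  have hdiv : HasDerivAt (fun τ => Λ τ / Real.sqrt (τ * (1 - Λ τ ^ 2)))
      ((L' * s - L * ((1 * (1 - L ^ 2) + t * (0 - 2 * L ^ 1 * L')) / (2 * s))) / s ^ 2) t :=
    hΛd.div hsqrt (ne_of_gt hspos)
  refine ⟨hdiv.differentiableAt, ?_⟩
  rw [hdiv.deriv]
  have hL' : L' = L * (ψ t - 1 / 2) / t := hΛ' t ht
  rw [hL']
  have hts : t ≠ 0 := ne_of_gt ht
  have hss : s ≠ 0 := ne_of_gt hspos
  field_simp
  linear_combination L * hs2
end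

section
/- Let α ≠ 0, x₀ ≠ 0, and t > 0. Then ∫_ℝ (2πt)^{−1/2} e^{−(x−x₀)²/(2t)} Φ(αx) dx ≠ Φ(αx₀), where Φ(u) = ∫_{−∞}^{u} e^{−s²/2} ds. Equivalently, the function Q(x,t|x₀,0) = (2πt)^{−1/2} e^{−(x−x₀)²/(2t)} Φ(αx)/Φ(αx₀) does not integrate to 1 over x ∈ ℝ when α x₀ ≠ 0. -/
open MeasureTheory Real Set

lemma integrable_g : Integrable (fun s : ℝ => Real.exp (-s ^ 2 / 2)) := by
  have h : (fun s : ℝ => Real.exp (-s ^ 2 / 2)) = fun s => Real.exp (-(1/2) * s ^ 2) := by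
    ext s; congr 1; ring
  rw [h]; exact integrable_exp_neg_mul_sq (by norm_num)

lemma gauss_sq (a b c : ℝ) (ha : 0 < a) :
    ∫ x : ℝ, Real.exp (-(a * x ^ 2 + b * x + c))
      = Real.sqrt (π / a) * Real.exp (b ^ 2 / (4 * a) - c) := by
  have key : ∀ x : ℝ, -(a * x ^ 2 + b * x + c)
      = -a * (x - (-(b / (2 * a)))) ^ 2 + (b ^ 2 / (4 * a) - c) := by
    intro x; field_simp; ring
  calc ∫ x : ℝ, Real.exp (-(a * x ^ 2 + b * x + c))
      = ∫ x : ℝ, Real.exp (-a * (x - (-(b / (2 * a)))) ^ 2) * Real.exp (b ^ 2 / (4 * a) - c) := by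
        congr 1; ext x; rw [← Real.exp_add, ← key x]
    _ = (∫ x : ℝ, Real.exp (-a * x ^ 2)) * Real.exp (b ^ 2 / (4 * a) - c) := by
        rw [integral_mul_const,
          integral_sub_right_eq_self (fun x => Real.exp (-a * x ^ 2)) (-(b / (2 * a)))]
    _ = Real.sqrt (π / a) * Real.exp (b ^ 2 / (4 * a) - c) := by rw [integral_gaussian]

lemma Phi_eq_Ioi (u : ℝ) : Phi u = ∫ w in Ioi (0:ℝ), Real.exp (-(w - u) ^ 2 / 2) := by
  have e : MeasurableEmbedding (fun x : ℝ => x + u) :=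
    (Homeomorph.addRight u).measurableEmbedding
  have hmap : Measure.map (fun x : ℝ => x + u) volume = volume :=
    map_add_right_eq_self volume u
  have h1 : (∫ w in Ioi (0:ℝ), Real.exp (-(w - u) ^ 2 / 2))
      = ∫ x in Ioi (-u), Real.exp (-x ^ 2 / 2) := by
    rw [show (∫ w in Ioi (0:ℝ), Real.exp (-(w - u) ^ 2 / 2))
        = ∫ w in Ioi (0:ℝ), Real.exp (-(w - u) ^ 2 / 2) ∂(Measure.map (fun x : ℝ => x + u) volume)
        from by rw [hmap]]
    rw [e.setIntegral_map]
    have hpre : (fun x : ℝ => x + u) ⁻¹' Ioi 0 = Ioi (-u) := by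
      ext x; simp [neg_lt_iff_pos_add, add_comm]
    rw [hpre]
    congr 1; ext x; congr 2; ring
  have h2 := integral_comp_neg_Ioi (-u) (fun x => Real.exp (-x ^ 2 / 2))
  simp only [neg_neg, neg_sq] at h2
  rw [h1, h2]; rfl

lemma Phi_strictMono : StrictMono Phi := by
  intro a b hab
  have hint := integrable_g
  have hsplit : Phi b = Phi a + ∫ s in Ioc a b, Real.exp (-s ^ 2 / 2) := by
    unfold Phi
    rw [← setIntegral_union (Iic_disjoint_Ioc le_rfl) measurableSet_Ioc
      hint.integrableOn hint.integrableOn, Iic_union_Ioc_eq_Iic hab.le]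
  have hpos : 0 < ∫ s in Ioc a b, Real.exp (-s ^ 2 / 2) := by
    rw [← intervalIntegral.integral_of_le hab.le]
    apply intervalIntegral.intervalIntegral_pos_of_pos_on
    · exact hint.intervalIntegrable
    · intro x _; positivity
    · exact hab
  linarith

lemma Phi_nonneg (u : ℝ) : 0 ≤ Phi u :=
  setIntegral_nonneg measurableSet_Iic fun x _ => (Real.exp_pos _).le

lemma Phi_le (u : ℝ) : Phi u ≤ ∫ s : ℝ, Real.exp (-s ^ 2 / 2) :=
  setIntegral_le_integral integrable_g (Filter.Eventually.of_forall fun x => (Real.exp_pos _).le)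

lemma Phi_monotone : Monotone Phi := Phi_strictMono.monotone

lemma Phi_measurable : Measurable Phi := Phi_monotone.measurable

lemma integrable_gauss_t (x₀ t : ℝ) (ht : 0 < t) :
    Integrable (fun x : ℝ => Real.exp (-(x - x₀) ^ 2 / (2 * t))) := by
  have h : (fun x : ℝ => Real.exp (-(x - x₀) ^ 2 / (2 * t)))
      = fun x => Real.exp (-(1 / (2 * t)) * (x - x₀) ^ 2) := by
    ext x; congr 1; field_simp
  rw [h]
  exact (integrable_exp_neg_mul_sq (by positivity)).comp_sub_right x₀

lemma inner_int (α x₀ t : ℝ) (ht : 0 < t) (w : ℝ) :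
    ∫ x : ℝ, (Real.sqrt (2 * π * t))⁻¹ * Real.exp (-(x - x₀) ^ 2 / (2 * t))
        * Real.exp (-(w - α * x) ^ 2 / 2)
      = (Real.sqrt (1 + α ^ 2 * t))⁻¹
        * Real.exp (-(w - α * x₀) ^ 2 / (2 * (1 + α ^ 2 * t))) := by
  set A : ℝ := 1 / (2 * t) + α ^ 2 / 2 with hA_def
  set B : ℝ := -(x₀ / t + α * w) with hB_def
  set C : ℝ := x₀ ^ 2 / (2 * t) + w ^ 2 / 2 with hC_def
  have hA : 0 < A := by positivity
  have ht' : (t : ℝ) ≠ 0 := ht.ne'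
  have hσ2 : (0:ℝ) < 1 + α ^ 2 * t := by positivity
  have hexp : ∀ x : ℝ, Real.exp (-(x - x₀) ^ 2 / (2 * t)) * Real.exp (-(w - α * x) ^ 2 / 2)
      = Real.exp (-(A * x ^ 2 + B * x + C)) := by
    intro x
    rw [← Real.exp_add]
    congr 1
    rw [hA_def, hB_def, hC_def]
    field_simp
    ring
  have step1 : ∫ x : ℝ, (Real.sqrt (2 * π * t))⁻¹ * Real.exp (-(x - x₀) ^ 2 / (2 * t))
        * Real.exp (-(w - α * x) ^ 2 / 2)
      = (Real.sqrt (2 * π * t))⁻¹ * ∫ x : ℝ, Real.exp (-(A * x ^ 2 + B * x + C)) := by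
    rw [← integral_const_mul]
    congr 1; ext x; rw [mul_assoc, hexp x]
  rw [step1, gauss_sq A B C hA]
  have hexp2 : B ^ 2 / (4 * A) - C = -(w - α * x₀) ^ 2 / (2 * (1 + α ^ 2 * t)) := by
    rw [hA_def, hB_def, hC_def]
    field_simp
    ring
  have hc : (Real.sqrt (2 * π * t))⁻¹ * Real.sqrt (π / A) = (Real.sqrt (1 + α ^ 2 * t))⁻¹ := by
    have h1 : π / A = (2 * π * t) / (1 + α ^ 2 * t) := by
      rw [hA_def]; field_simp
    rw [h1, Real.sqrt_div (by positivity) _]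
    rw [div_eq_mul_inv, ← mul_assoc, inv_mul_cancel₀ (by positivity), one_mul]
  rw [hexp2, ← mul_assoc, hc]

lemma tail_int (m σ2 : ℝ) (h : 0 < σ2) :
    ∫ w in Ioi (0:ℝ), (Real.sqrt σ2)⁻¹ * Real.exp (-(w - m) ^ 2 / (2 * σ2))
      = Phi (m / Real.sqrt σ2) := by
  set σ := Real.sqrt σ2 with hσ_def
  have hσ : 0 < σ := Real.sqrt_pos.2 h
  have hsq : σ ^ 2 = σ2 := Real.sq_sqrt h.le
  have hch := integral_comp_mul_left_Ioi
    (fun w => Real.exp (-(w - m) ^ 2 / (2 * σ2))) 0 hσ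
  simp only [mul_zero, smul_eq_mul] at hch
  rw [integral_const_mul, ← hch]
  have : ∀ v : ℝ, Real.exp (-(σ * v - m) ^ 2 / (2 * σ2)) = Real.exp (-(v - m / σ) ^ 2 / 2) := by
    intro v
    congr 1
    have : (σ * v - m) ^ 2 = σ2 * (v - m / σ) ^ 2 := by
      rw [← hsq]; field_simp
    rw [this]
    field_simp
  simp_rw [this]
  rw [Phi_eq_Ioi]

lemma F_integrable (α x₀ t : ℝ) (ht : 0 < t) :
    Integrable (Function.uncurry fun x w : ℝ =>
        (Real.sqrt (2 * π * t))⁻¹ * Real.exp (-(x - x₀) ^ 2 / (2 * t))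
          * Real.exp (-(w - α * x) ^ 2 / 2))
      (volume.prod (volume.restrict (Ioi 0))) := by
  have hcont : Continuous (Function.uncurry fun x w : ℝ =>
      (Real.sqrt (2 * π * t))⁻¹ * Real.exp (-(x - x₀) ^ 2 / (2 * t))
        * Real.exp (-(w - α * x) ^ 2 / 2)) := by
    apply Continuous.mul
    · fun_prop
    · fun_prop
  rw [integrable_prod_iff hcont.aestronglyMeasurable]
  constructor
  · refine Filter.Eventually.of_forall fun x => ?_
    simp only [Function.uncurry_apply_pair]
    exact (integrable_g.comp_sub_right (α * x)).restrict.const_mul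
      ((Real.sqrt (2 * π * t))⁻¹ * Real.exp (-(x - x₀) ^ 2 / (2 * t)))
  · have hmain : Integrable (fun x => (Real.sqrt (2 * π * t))⁻¹
        * Real.exp (-(x - x₀) ^ 2 / (2 * t)) * Phi (α * x)) := by
      have hmeas : Measurable fun x => (Real.sqrt (2 * π * t))⁻¹
          * Real.exp (-(x - x₀) ^ 2 / (2 * t)) * Phi (α * x) := by
        apply Measurable.mul
        · fun_prop
        · exact Phi_measurable.comp (measurable_const_mul α)
      apply Integrable.mono
        (g := fun x => (∫ s : ℝ, Real.exp (-s ^ 2 / 2))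
          * ((Real.sqrt (2 * π * t))⁻¹ * Real.exp (-(x - x₀) ^ 2 / (2 * t))))
      · exact ((integrable_gauss_t x₀ t ht).const_mul _).const_mul _
      · exact hmeas.aestronglyMeasurable
      · refine Filter.Eventually.of_forall fun x => ?_
        have h1 : (0:ℝ) ≤ (Real.sqrt (2 * π * t))⁻¹ * Real.exp (-(x - x₀) ^ 2 / (2 * t)) := by
          positivity
        have h2 := Phi_le (α * x)
        have h3 := Phi_nonneg (α * x)
        rw [Real.norm_of_nonneg (by positivity), Real.norm_of_nonneg (by positivity)]
        calc (Real.sqrt (2 * π * t))⁻¹ * Real.exp (-(x - x₀) ^ 2 / (2 * t)) * Phi (α * x)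
            ≤ (Real.sqrt (2 * π * t))⁻¹ * Real.exp (-(x - x₀) ^ 2 / (2 * t))
              * ∫ s : ℝ, Real.exp (-s ^ 2 / 2) := mul_le_mul_of_nonneg_left h2 h1
          _ = _ := by ring
    refine hmain.congr (Filter.Eventually.of_forall fun x => ?_)
    simp only [Function.uncurry_apply_pair]
    have hn : ∀ w : ℝ, ‖(Real.sqrt (2 * π * t))⁻¹ * Real.exp (-(x - x₀) ^ 2 / (2 * t))
        * Real.exp (-(w - α * x) ^ 2 / 2)‖
        = (Real.sqrt (2 * π * t))⁻¹ * Real.exp (-(x - x₀) ^ 2 / (2 * t))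
          * Real.exp (-(w - α * x) ^ 2 / 2) := fun w =>
      Real.norm_of_nonneg (by positivity)
    simp_rw [hn, mul_assoc, integral_const_mul, ← Phi_eq_Ioi]

/-- Non-normalization claim from the proof of Corollary 3.2: for `α ≠ 0`, `x₀ ≠ 0` and
`t > 0`, `∫ (2πt)^{-1/2} e^{-(x-x₀)²/(2t)} Φ(αx) dx ≠ Φ(αx₀)`; equivalently, the density
`G_t(x-x₀) Φ(αx)/Φ(αx₀)` does not integrate to 1. -/
theorem stmt_12 (α x₀ t : ℝ) (hα : α ≠ 0) (hx₀ : x₀ ≠ 0) (ht : 0 < t) :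
    (∫ x : ℝ, (Real.sqrt (2 * Real.pi * t))⁻¹ * Real.exp (-(x - x₀) ^ 2 / (2 * t))
        * Phi (α * x))
      ≠ Phi (α * x₀) := by
  have hσ2 : (0:ℝ) < 1 + α ^ 2 * t := by positivity
  set σ : ℝ := Real.sqrt (1 + α ^ 2 * t) with hσ_def
  have hσ1 : 1 < σ := by
    have h' : (1:ℝ) < 1 + α ^ 2 * t := by
      nlinarith [mul_pos (show (0:ℝ) < α ^ 2 by positivity) ht]
    calc (1:ℝ) = Real.sqrt 1 := Real.sqrt_one.symm
      _ < σ := Real.sqrt_lt_sqrt (by norm_num) h'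
  have key : (∫ x : ℝ, (Real.sqrt (2 * Real.pi * t))⁻¹ * Real.exp (-(x - x₀) ^ 2 / (2 * t))
        * Phi (α * x)) = Phi (α * x₀ / σ) := by
    have step1 : (∫ x : ℝ, (Real.sqrt (2 * Real.pi * t))⁻¹
          * Real.exp (-(x - x₀) ^ 2 / (2 * t)) * Phi (α * x))
        = ∫ x : ℝ, ∫ w in Ioi (0:ℝ), (Real.sqrt (2 * Real.pi * t))⁻¹
            * Real.exp (-(x - x₀) ^ 2 / (2 * t)) * Real.exp (-(w - α * x) ^ 2 / 2) := by
      congr 1; ext x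
      rw [Phi_eq_Ioi, ← integral_const_mul]
    rw [step1, integral_integral_swap (F_integrable α x₀ t ht)]
    have step2 : ∀ w : ℝ, (∫ x : ℝ, (Real.sqrt (2 * Real.pi * t))⁻¹
          * Real.exp (-(x - x₀) ^ 2 / (2 * t)) * Real.exp (-(w - α * x) ^ 2 / 2))
        = σ⁻¹ * Real.exp (-(w - α * x₀) ^ 2 / (2 * (1 + α ^ 2 * t))) :=
      fun w => inner_int α x₀ t ht w
    simp_rw [step2]
    exact tail_int (α * x₀) (1 + α ^ 2 * t) hσ2
  rw [key]
  intro hcontra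
  have hne : α * x₀ / σ ≠ α * x₀ := by
    intro h
    have hm : α * x₀ ≠ 0 := mul_ne_zero hα hx₀
    have hσ0 : σ ≠ 0 := by positivity
    rw [div_eq_iff hσ0] at h
    have : σ = 1 := by
      have := mul_left_cancel₀ hm (by linarith [h] : α * x₀ * 1 = α * x₀ * σ)
      linarith
    linarith
  exact hne (Phi_strictMono.injective hcontra)
end

section
/- Let λ > 0 and ε ∈ {−1, +1}. Define h_ε(x,t) = e^{−λt} e^{λx²} (√λ/√π) ∫_{−∞}^{εx} e^{−λs²} ds for x ∈ ℝ, t ∈ ℝ. Then h_ε is smooth and satisfies ∂_t h_ε(x,t) − λ x ∂_x h_ε(x,t) + (1/2) ∂_{xx} h_ε(x,t) = 0 for all x ∈ ℝ and t ∈ ℝ; that is, h_ε is space–time harmonic for the stationary Ornstein–Uhlenbeck generator L φ = −λx φ' + (1/2)φ''. -/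
/-- Coefficients of the power series of `y ↦ ∫_0^y e^{-λ s²} ds`. -/
noncomputable def gaussCoeff (lam : ℝ) (n : ℕ) : ℝ :=
  if n % 2 = 1 then (-lam) ^ (n / 2) / ((n / 2).factorial * n) else 0

lemma gaussCoeff_odd (lam : ℝ) (k : ℕ) :
    gaussCoeff lam (2 * k + 1) = (-lam) ^ k / (k.factorial * (2 * (k:ℝ) + 1)) := by
  have h1 : (2 * k + 1) % 2 = 1 := by omega
  have h2 : (2 * k + 1) / 2 = k := by omega
  rw [gaussCoeff, if_pos h1, h2]
  push_cast
  ring_nf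

lemma gaussCoeff_even (lam : ℝ) (n : ℕ) (h : n % 2 = 0) : gaussCoeff lam n = 0 := by
  rw [gaussCoeff, if_neg (by omega)]

lemma abs_gaussCoeff_odd (lam : ℝ) (hlam : 0 < lam) (k : ℕ) :
    |gaussCoeff lam (2 * k + 1)| = lam ^ k / (k.factorial * (2 * (k:ℝ) + 1)) := by
  rw [gaussCoeff_odd, abs_div, abs_pow, abs_neg, abs_of_pos hlam, abs_of_pos]
  positivity

set_option maxHeartbeats 1000000 in
open FormalMultilinearSeries in
/-- The antiderivative of the Gaussian is analytic. -/
lemma analyticG (lam : ℝ) (hlam : 0 < lam) :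
    ContDiff ℝ (⊤ : WithTop ℕ∞)
      (fun y : ℝ => ∫ s in (0 : ℝ)..y, Real.exp (-lam * s ^ 2)) := by
  have hgc : Continuous (fun y : ℝ => Real.exp (-lam * y ^ 2)) :=
    Real.continuous_exp.comp (continuous_const.mul (continuous_id.pow 2))
  set c : ℕ → ℝ := gaussCoeff lam with hc
  set i : ℕ → ℕ := fun k => 2 * k + 1 with hi
  have hiinj : Function.Injective i := fun a b h => by simp only [hi] at h; omega
  have hczero : ∀ n, n ∉ Set.range i → c n = 0 := by
    intro n hn
    apply gaussCoeff_even
    by_contra h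
    exact hn ⟨n / 2, by simp only [hi]; omega⟩
  -- the power series
  set p : FormalMultilinearSeries ℝ ℝ ℝ := FormalMultilinearSeries.ofScalars ℝ c with hp
  have hpnorm : ∀ n, ‖p n‖ = |c n| := by
    intro n
    rw [hp]
    rw [FormalMultilinearSeries.ofScalars_norm]
    exact Real.norm_eq_abs _
  have hfact : ∀ k : ℕ, (0:ℝ) < k.factorial := fun k => by positivity
  have hradius : p.radius = ⊤ := by
    apply FormalMultilinearSeries.radius_eq_top_of_summable_norm
    intro r
    simp_rw [hpnorm]
    rw [← Function.Injective.summable_iff hiinj (fun n hn => by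
      rw [hczero n hn, abs_zero, zero_mul])]
    simp only [Function.comp_def, hi]
    apply Summable.of_nonneg_of_le (fun k => by positivity) (fun k => ?_)
      ((Real.summable_pow_div_factorial (lam * (r : ℝ) ^ 2)).mul_left (r : ℝ))
    have hk := hfact k
    have hk1 : (0:ℝ) < 2 * (k:ℝ) + 1 := by positivity
    calc |c (2 * k + 1)| * (r : ℝ) ^ (2 * k + 1)
        = lam ^ k * (r:ℝ) ^ (2 * k + 1) / (k.factorial * (2 * (k:ℝ) + 1)) := by
          rw [hc, abs_gaussCoeff_odd lam hlam k]; ring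
      _ ≤ lam ^ k * (r:ℝ) ^ (2 * k + 1) / (k.factorial * 1) := by
          apply div_le_div_of_nonneg_left (by positivity) (by positivity)
          have : (1:ℝ) ≤ 2 * (k:ℝ) + 1 := by
            have := Nat.cast_nonneg (α := ℝ) k; linarith
          nlinarith
      _ = (r:ℝ) * ((lam * (r:ℝ) ^ 2) ^ k / k.factorial) := by
          rw [mul_pow, ← pow_mul]; ring
  have hball : HasFPowerSeriesOnBall p.sum p 0 p.radius :=
    p.hasFPowerSeriesOnBall (by rw [hradius]; exact ENNReal.zero_lt_top)
  have han : AnalyticOnNhd ℝ p.sum Set.univ := fun y _ =>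
    hball.analyticAt_of_mem (by rw [hradius]; simp [EMetric.mem_ball, edist_lt_top])
  -- identify the sum
  have hS : ∀ y : ℝ, p.sum y = ∑' n, c n * y ^ n := by
    intro y
    have h := FormalMultilinearSeries.ofScalars_sum_eq c y
    simp only [smul_eq_mul] at h
    exact h
  have hzero_at_zero : (fun n : ℕ => c n * (0:ℝ) ^ n) = fun _ => 0 := by
    funext n
    cases n with
    | zero => simp [hc, gaussCoeff]
    | succ m => simp
  -- termwise differentiation
  have hS'd : ∀ y : ℝ, HasDerivAt (fun z : ℝ => ∑' n, c n * z ^ n)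
      (Real.exp (-lam * y ^ 2)) y := by
    intro y
    set R : ℝ := |y| + 1 with hR
    have hR1 : 1 ≤ R := by rw [hR]; linarith [abs_nonneg y]
    have hR0 : 0 ≤ R := by linarith
    have hu_sum : Summable (fun n : ℕ => |c n| * n * R ^ (n - 1)) := by
      rw [← Function.Injective.summable_iff hiinj (fun n hn => by
        rw [hczero n hn, abs_zero, zero_mul, zero_mul])]
      simp only [Function.comp_def, hi]
      have heq : (fun k : ℕ => |c (2 * k + 1)| * (2 * k + 1 : ℕ) * R ^ (2 * k + 1 - 1))
          = fun k : ℕ => (lam * R ^ 2) ^ k / k.factorial := by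
        funext k
        have hk := hfact k
        have h2 : 2 * k + 1 - 1 = 2 * k := by omega
        have hk1 : (0:ℝ) < 2 * (k:ℝ) + 1 := by positivity
        rw [h2, hc, abs_gaussCoeff_odd lam hlam k, mul_pow, ← pow_mul]
        push_cast
        field_simp
      rw [heq]
      exact Real.summable_pow_div_factorial _
    have hderiv : ∀ (n : ℕ) (z : ℝ), z ∈ Set.Ioo (-R) R → HasDerivAt (fun z : ℝ => c n * z ^ n)
        (c n * (n * z ^ (n - 1))) z := fun n z _ => (hasDerivAt_pow n z).const_mul (c n)
    have hbound : ∀ (n : ℕ) (z : ℝ), z ∈ Set.Ioo (-R) R →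
        ‖c n * (n * z ^ (n - 1))‖ ≤ |c n| * n * R ^ (n - 1) := by
      intro n z hz
      have hzR : |z| ≤ R := le_of_lt (abs_lt.mpr ⟨hz.1, hz.2⟩)
      rw [Real.norm_eq_abs, abs_mul, abs_mul, abs_pow, Nat.abs_cast, ← mul_assoc]
      gcongr
    have h0mem : (0:ℝ) ∈ Set.Ioo (-R) R := ⟨by linarith, by linarith⟩
    have hymem : y ∈ Set.Ioo (-R) R := by
      constructor
      · rw [hR]; cases abs_cases y <;> linarith
      · rw [hR]; cases abs_cases y <;> linarith
    have hg0 : Summable fun n => c n * (0:ℝ) ^ n := by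
      rw [hzero_at_zero]; exact summable_zero
    have hmain := hasDerivAt_tsum_of_isPreconnected hu_sum isOpen_Ioo
      isPreconnected_Ioo hderiv hbound h0mem hg0 hymem
    have hsum_deriv : HasSum (fun n : ℕ => c n * (n * y ^ (n - 1)))
        (Real.exp (-lam * y ^ 2)) := by
      rw [← Function.Injective.hasSum_iff hiinj (fun n hn => by
        simp only [hczero n hn, zero_mul])]
      have hexp : HasSum (fun k : ℕ => (-lam * y ^ 2) ^ k / k.factorial)
          (Real.exp (-lam * y ^ 2)) := by
        rw [Real.exp_eq_exp_ℝ]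
        exact NormedSpace.expSeries_div_hasSum_exp (-lam * y ^ 2)
      have heq : ((fun n : ℕ => c n * (n * y ^ (n - 1))) ∘ i)
          = fun k : ℕ => (-lam * y ^ 2) ^ k / k.factorial := by
        funext k
        have hk := hfact k
        have h2 : 2 * k + 1 - 1 = 2 * k := by omega
        have hk1 : (0:ℝ) < 2 * (k:ℝ) + 1 := by positivity
        simp only [Function.comp_apply, hi, h2, hc, gaussCoeff_odd lam k]
        rw [mul_pow, ← pow_mul]
        push_cast
        field_simp
      rw [heq]
      exact hexp
    rw [hsum_deriv.tsum_eq] at hmain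
    exact hmain
  have hS'd2 : ∀ y : ℝ, HasDerivAt p.sum (Real.exp (-lam * y ^ 2)) y := by
    intro y
    have heq : (fun z : ℝ => ∑' n, c n * z ^ n) = p.sum := funext fun z => (hS z).symm
    rw [← heq]
    exact hS'd y
  have hGd : ∀ y : ℝ, HasDerivAt (fun y : ℝ => ∫ s in (0:ℝ)..y, Real.exp (-lam * s ^ 2))
      (Real.exp (-lam * y ^ 2)) y := fun y =>
    intervalIntegral.integral_hasDerivAt_right (hgc.intervalIntegrable _ _)
      (hgc.stronglyMeasurableAtFilter _ _) hgc.continuousAt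
  have hGeq : (fun y : ℝ => ∫ s in (0:ℝ)..y, Real.exp (-lam * s ^ 2)) = p.sum := by
    funext y
    have hdiff : Differentiable ℝ
        (fun y : ℝ => (∫ s in (0:ℝ)..y, Real.exp (-lam * s ^ 2)) - p.sum y) :=
      fun z => ((hGd z).sub (hS'd2 z)).differentiableAt
    have hzero : ∀ z : ℝ,
        deriv (fun y : ℝ => (∫ s in (0:ℝ)..y, Real.exp (-lam * s ^ 2)) - p.sum y) z = 0 := by
      intro z
      rw [show (fun y : ℝ => (∫ s in (0:ℝ)..y, Real.exp (-lam * s ^ 2)) - p.sum y) = (fun y : ℝ => ∫ s in (0:ℝ)..y, Real.exp (-lam * s ^ 2)) - p.sum from rfl, ((hGd z).sub (hS'd2 z)).deriv]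
      ring
    have hconst := is_const_of_deriv_eq_zero hdiff hzero y 0
    have hG0 : (∫ s in (0:ℝ)..(0:ℝ), Real.exp (-lam * s ^ 2)) = 0 :=
      intervalIntegral.integral_same
    have hS0 : p.sum 0 = 0 := by rw [hS, hzero_at_zero]; exact tsum_zero
    simp only [hG0, hS0, sub_zero] at hconst
    linarith
  rw [hGeq]
  exact han.contDiff

/-- The space–time harmonic function of Theorem 4 for the stationary Ornstein–Uhlenbeck
process: `h_ε(x,t) = e^{-λt} e^{λx²} (√λ/√π) ∫_{-∞}^{εx} e^{-λs²} ds`. -/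
noncomputable def hOU (lam ε x t : ℝ) : ℝ :=
  Real.exp (-lam * t) * Real.exp (lam * x ^ 2) * (Real.sqrt lam / Real.sqrt Real.pi) *
    ∫ s in Set.Iic (ε * x), Real.exp (-lam * s ^ 2)

/-- Theorem 4 (martingale-function claim): `h_ε` is smooth and space–time harmonic for
the stationary Ornstein–Uhlenbeck generator, i.e.
`∂_t h_ε - λx ∂_x h_ε + (1/2) ∂_{xx} h_ε = 0` everywhere. -/
theorem stmt_14 (lam : ℝ) (hlam : 0 < lam) (ε : ℝ) (hε : ε = 1 ∨ ε = -1) :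
    ContDiff ℝ (⊤ : ℕ∞) (fun p : ℝ × ℝ => hOU lam ε p.1 p.2) ∧
    ∀ (x t : ℝ),
      deriv (fun τ => hOU lam ε x τ) t
        - lam * x * deriv (fun y => hOU lam ε y t) x
        + (1 / 2) * deriv (deriv (fun y => hOU lam ε y t)) x = 0 := by
  have hε2 : ε ^ 2 = 1 := by rcases hε with h | h <;> simp [h]
  set g : ℝ → ℝ := fun y => Real.exp (-lam * y ^ 2) with hg_def
  have hgc : Continuous g :=
    Real.continuous_exp.comp (continuous_const.mul (continuous_id.pow 2))
  set K : ℝ := Real.sqrt lam / Real.sqrt Real.pi with hK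
  set C : ℝ := ∫ s in Set.Iic (0 : ℝ), g s with hCdef
  set G : ℝ → ℝ := fun y => ∫ s in (0 : ℝ)..y, g s with hGdef
  have hInt : MeasureTheory.Integrable g := by
    simpa [hg_def] using integrable_exp_neg_mul_sq hlam
  have hIic : ∀ y : ℝ, (∫ s in Set.Iic y, g s) = C + G y := by
    intro y
    have h := intervalIntegral.integral_Iic_sub_Iic (hInt.integrableOn (s := Set.Iic (0:ℝ)))
      (hInt.integrableOn (s := Set.Iic y))
    have h2 : G y = ∫ s in (0:ℝ)..y, g s := rfl
    linarith [h, h2]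
  have hG : ∀ y : ℝ, HasDerivAt G (g y) y := fun y =>
    intervalIntegral.integral_hasDerivAt_right (hgc.intervalIntegrable _ _)
      (hgc.stronglyMeasurableAtFilter _ _) hgc.continuousAt
  set φ : ℝ → ℝ := fun x => Real.exp (lam * x ^ 2) * K * (C + G (ε * x)) with hφdef
  have hOU_eq : ∀ x t : ℝ, hOU lam ε x t = Real.exp (-lam * t) * φ x := by
    intro x t
    have h1 : (∫ s in Set.Iic (ε * x), Real.exp (-lam * s ^ 2)) = C + G (ε * x) := hIic (ε * x)
    rw [hOU, h1, hφdef]; ring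
  have hexp : ∀ x : ℝ, HasDerivAt (fun x : ℝ => Real.exp (lam * x ^ 2))
      (Real.exp (lam * x ^ 2) * (lam * (2 * x))) x := by
    intro x
    have h1 : HasDerivAt (fun x : ℝ => lam * x ^ 2) (lam * (2 * x)) x := by
      simpa [mul_comm] using (hasDerivAt_pow 2 x).const_mul lam
    exact h1.exp
  have hkey : ∀ x : ℝ, Real.exp (lam * x ^ 2) * g (ε * x) = 1 := by
    intro x
    have h2 : (ε * x) ^ 2 = x ^ 2 := by rw [mul_pow, hε2, one_mul]
    rw [hg_def]; simp only [h2, ← Real.exp_add]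
    ring_nf
    exact Real.exp_zero
  have hφ' : ∀ x : ℝ, HasDerivAt φ (2 * lam * x * φ x + K * ε) x := by
    intro x
    have hlin : HasDerivAt (fun x : ℝ => ε * x) ε x := by
      simpa using (hasDerivAt_id x).const_mul ε
    have hGc : HasDerivAt (fun x : ℝ => C + G (ε * x)) (g (ε * x) * ε) x :=
      ((hG (ε * x)).comp x hlin).const_add C
    have h := ((hexp x).mul_const K).mul hGc
    refine h.congr_deriv ?_
    rw [hφdef]
    linear_combination (K * ε) * hkey x
  have hDx : ∀ t : ℝ, deriv (fun y => hOU lam ε y t)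
      = fun x => Real.exp (-lam * t) * (2 * lam * x * φ x + K * ε) := by
    intro t
    funext x
    have heq : (fun y => hOU lam ε y t) = fun y => Real.exp (-lam * t) * φ y :=
      funext fun y => hOU_eq y t
    rw [heq]
    exact ((hφ' x).const_mul _).deriv
  constructor
  · have hGsm : ContDiff ℝ (⊤ : ℕ∞) G := (analyticG lam hlam).of_le le_top
    have hφsm : ContDiff ℝ (⊤ : ℕ∞) φ :=
      ((Real.contDiff_exp.comp (contDiff_const.mul (contDiff_id.pow 2))).mul
        contDiff_const).mul (contDiff_const.add (hGsm.comp (contDiff_const.mul contDiff_id)))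
    have heq : (fun p : ℝ × ℝ => hOU lam ε p.1 p.2)
        = fun p : ℝ × ℝ => Real.exp (-lam * p.2) * φ p.1 :=
      funext fun p => hOU_eq p.1 p.2
    rw [heq]
    exact (Real.contDiff_exp.comp (contDiff_const.mul contDiff_snd)).mul (hφsm.comp contDiff_fst)
  · intro x t
    have hdt : deriv (fun τ => hOU lam ε x τ) t
        = -lam * Real.exp (-lam * t) * φ x := by
      have heq : (fun τ => hOU lam ε x τ) = fun τ => Real.exp (-lam * τ) * φ x :=
        funext fun τ => hOU_eq x τ
      rw [heq]
      have hE : HasDerivAt (fun τ : ℝ => Real.exp (-lam * τ)) (-lam * Real.exp (-lam * t)) t := by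
        have h1 : HasDerivAt (fun τ : ℝ => -lam * τ) (-lam) t := by
          simpa using (hasDerivAt_id t).const_mul (-lam)
        simpa [mul_comm] using h1.exp
      exact (hE.mul_const (φ x)).deriv
    have hdxx : deriv (deriv (fun y => hOU lam ε y t)) x
        = Real.exp (-lam * t) * (2 * lam * φ x + 2 * lam * x * (2 * lam * x * φ x + K * ε)) := by
      rw [hDx t]
      have ha : HasDerivAt (fun x : ℝ => 2 * lam * x) (2 * lam) x := by
        simpa using (hasDerivAt_id x).const_mul (2 * lam)
      have h := ((ha.mul (hφ' x)).add_const (K * ε)).const_mul (Real.exp (-lam * t))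
      exact h.deriv
      try ring
    rw [hdt, hdxx, hDx t]
    ring
end
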